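/- The class of πCLL*-typable processes strictly contains the class of πILL-typable processes: I ⊊ C, where I is the set of processes P such that Γ; Δ ⊢_I P :: x:A is derivable in πILL for some Γ, Δ, x, A, and C is the set of processes P such that P ⊢_C Γ; Δ is derivable in πCLL* for some Γ, Δ. -/

import Mathlib

/-!
Reading a πILL judgment Γ; Δ ⊢_I P :: z:C as the one-sided sequent P ⊢_C Γ^⊥; Δ^⊥, z:C turns
every πILL rule into a πCLL* rule: left rules become right rules on dual types (⊗L and ⊸R
become ⅋, !L becomes ?, cuts stay cuts up to A^⊥⊥ = A), so I ⊆ C.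

The inclusion is strict because of !x(y).y().ν3 2̄⟨3⟩.3̄⟨⟩.0, which πCLL* types with x:!⊥ using
the unrestricted assumption 2:1. In πILL the body of a replicated input is typed with an empty
linear context, whereas y().Q only types with y:1 among the linear assumptions; substitution
(through !L) does not change the shape of a process, so no πILL derivation can end in it.
-/

/-- ULL propositions (session types). -/
inductive STyp : Type where
  | one : STyp
  | bot : STyp
  | tensor : STyp → STyp → STyp
  | lolli : STyp → STyp → STyp
  | oplus : Finset ℕ → (ℕ → STyp) → STyp
  | withT : Finset ℕ → (ℕ → STyp) → STyp
  | bang : STyp → STyp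
  | quest : STyp → STyp

/-- Duality of ULL propositions. -/
def STyp.dual : STyp → STyp
  | .one => .bot
  | .bot => .one
  | .tensor A B => .lolli A B.dual
  | .lolli A B => .tensor A B.dual
  | .oplus I f => .withT I fun i => (f i).dual
  | .withT I f => .oplus I fun i => (f i).dual
  | .bang A => .quest A.dual
  | .quest A => .bang A.dual

/-- A ⅋ B := dual(A) ⊸ B. -/
def STyp.parr (A B : STyp) : STyp := .lolli A.dual B

/-- π-calculus processes. -/
inductive Proc : Type where
  | nil : Proc
  | nu : ℕ → Proc → Proc
  | par : Proc → Proc → Proc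
  | out : ℕ → ℕ → Proc → Proc        -- x̄⟨y⟩.P
  | inp : ℕ → ℕ → Proc → Proc        -- x(y).P
  | sel : ℕ → ℕ → Proc → Proc        -- x ◁ ℓ.P
  | bra : ℕ → Finset ℕ → (ℕ → Proc) → Proc  -- x ▷ {i : P_i}_{i∈I}
  | rep : ℕ → ℕ → Proc → Proc        -- !x(y).P
  | fwd : ℕ → ℕ → Proc               -- [x↔y]
  | closeS : ℕ → Proc → Proc         -- x̄⟨⟩.P
  | closeR : ℕ → Proc → Proc         -- x().P

/-- Free names. -/
def Proc.fn : Proc → Set ℕ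
  | .nil => ∅
  | .nu x P => P.fn \ {x}
  | .par P Q => P.fn ∪ Q.fn
  | .out x y P => {x, y} ∪ P.fn
  | .inp x y P => {x} ∪ (P.fn \ {y})
  | .sel x _ P => {x} ∪ P.fn
  | .bra x I Ps => {x} ∪ ⋃ i ∈ I, (Ps i).fn
  | .rep x y P => {x} ∪ (P.fn \ {y})
  | .fwd x y => {x, y}
  | .closeS x P => {x} ∪ P.fn
  | .closeR x P => {x} ∪ P.fn

/-- Substitution on names. -/
def subName (y x n : ℕ) : ℕ := if n = x then y else n

/-- `P.subst y x` is the (Barendregt-convention) substitution P{y/x} of y for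
free occurrences of x in P. -/
def Proc.subst : Proc → ℕ → ℕ → Proc
  | .nil, _, _ => .nil
  | .nu z P, y, x => if z = x then .nu z P else .nu z (P.subst y x)
  | .par P Q, y, x => .par (P.subst y x) (Q.subst y x)
  | .out a b P, y, x => .out (subName y x a) (subName y x b) (P.subst y x)
  | .inp a z P, y, x =>
      if z = x then .inp (subName y x a) z P else .inp (subName y x a) z (P.subst y x)
  | .sel a l P, y, x => .sel (subName y x a) l (P.subst y x)
  | .bra a I Ps, y, x => .bra (subName y x a) I fun i => (Ps i).subst y x
  | .rep a z P, y, x =>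
      if z = x then .rep (subName y x a) z P else .rep (subName y x a) z (P.subst y x)
  | .fwd a b, y, x => .fwd (subName y x a) (subName y x b)
  | .closeS a P, y, x => .closeS (subName y x a) (P.subst y x)
  | .closeR a P, y, x => .closeR (subName y x a) (P.subst y x)

/-- Structural congruence: the least congruence satisfying the axioms of Fig. 1 (top). -/
inductive SC : Proc → Proc → Prop where
  | cutSymm : SC (.nu x (.par P Q)) (.nu x (.par Q P))
  | cutAssocL : x ∉ Q.fn → y ∉ P.fn →
      SC (.nu x (.par P (.nu y (.par Q R)))) (.nu y (.par Q (.nu x (.par P R))))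
  | cutAssocR : x ∉ R.fn → y ∉ P.fn →
      SC (.nu x (.par P (.nu y (.par Q R)))) (.nu y (.par (.nu x (.par P Q)) R))
  | refl : SC P P
  | symm : SC P Q → SC Q P
  | trans : SC P Q → SC Q R → SC P R
  | nu : SC P Q → SC (.nu x P) (.nu x Q)
  | parL : SC P P' → SC (.par P Q) (.par P' Q)
  | parR : SC Q Q' → SC (.par P Q) (.par P Q')
  | out : SC P Q → SC (.out x y P) (.out x y Q)
  | inp : SC P Q → SC (.inp x y P) (.inp x y Q)
  | sel : SC P Q → SC (.sel x l P) (.sel x l Q)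
  | bra : (∀ i, SC (Ps i) (Qs i)) → SC (.bra x I Ps) (.bra x I Qs)
  | rep : SC P Q → SC (.rep x y P) (.rep x y Q)
  | closeS : SC P Q → SC (.closeS x P) (.closeS x Q)
  | closeR : SC P Q → SC (.closeR x P) (.closeR x Q)

/-- Reduction (β-rules, κ-rules, and closure rules). -/
inductive Red : Proc → Proc → Prop where
  | betaId : x ≠ y → Red (.nu x (.par P (.fwd x y))) (P.subst y x)
  | betaClose : Red (.nu x (.par (.closeS x .nil) (.closeR x Q))) Q
  | betaSend :
      Red (.nu x (.par (.nu y (.out x y (.par P1 P2))) (.inp x z Q)))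
          (.nu x (.par P2 (.nu y (.par P1 (Q.subst y z)))))
  | betaSel : j ∈ I →
      Red (.nu x (.par (.sel x j P) (.bra x I Qs))) (.nu x (.par P (Qs j)))
  | betaServ :
      Red (.nu x (.par (.nu y (.out x y P)) (.rep x z Q)))
          (.nu x (.par (.nu y (.par P (Q.subst y z))) (.rep x z Q)))
  | betaWeaken : x ∉ P.fn → Red (.nu x (.par P (.rep x z Q))) P
  | kClose : Red (.nu y (.par P (.closeR x Q))) (.closeR x (.nu y (.par P Q)))
  | kSendR : y ∈ Q2.fn →
      Red (.nu y (.par P (.nu z (.out x z (.par Q1 Q2)))))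
          (.nu z (.out x z (.par Q1 (.nu y (.par P Q2)))))
  | kSendL : y ∈ Q1.fn →
      Red (.nu y (.par P (.nu z (.out x z (.par Q1 Q2)))))
          (.nu z (.out x z (.par (.nu y (.par P Q1)) Q2)))
  | kRecv : Red (.nu y (.par P (.inp x z Q))) (.inp x z (.nu y (.par P Q)))
  | kSel : Red (.nu y (.par P (.sel x l Q))) (.sel x l (.nu y (.par P Q)))
  | kBra : Red (.nu y (.par (.bra x I Ps) Q)) (.bra x I fun i => .nu y (.par (Ps i) Q))
  | par : Red Q Q' → Red (.par P Q) (.par P Q')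
  | res : Red P Q → Red (.nu y P) (.nu y Q)
  | sc : SC P P' → Red P' Q' → SC Q' Q → Red P Q

/-- Typing contexts: multisets of assignments x:A. -/
abbrev Ctx : Type := Multiset (ℕ × STyp)

/-- Duality extended to contexts. -/
def Ctx.dual (Δ : Ctx) : Ctx := Δ.map fun p => (p.1, p.2.dual)

/-- The πULL type system, generalized by a predicate `pr` that the right-hand
linear context of the conclusion of every rule instance (hence every sequent
in a derivation) must satisfy. -/
inductive ULLg (pr : Ctx → Prop) : Ctx → Ctx → Proc → Ctx → Prop where
  | idR : pr {(y, A)} → ULLg pr Γ {(x, A)} (.fwd x y) {(y, A)}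
  | idL : pr 0 → ULLg pr Γ ((x, A) ::ₘ {(y, A.dual)}) (.fwd x y) 0
  | oneR : pr {(x, .one)} → ULLg pr Γ 0 (.closeS x .nil) {(x, .one)}
  | oneL : pr Λ → ULLg pr Γ Δ P Λ → ULLg pr Γ ((x, .one) ::ₘ Δ) (.closeR x P) Λ
  | botR : pr ((x, .bot) ::ₘ Λ) → ULLg pr Γ Δ P Λ →
      ULLg pr Γ Δ (.closeR x P) ((x, .bot) ::ₘ Λ)
  | botL : pr 0 → ULLg pr Γ {(x, .bot)} (.closeS x .nil) 0
  | tensorR : pr ((x, .tensor A B) ::ₘ (Λ + Λ')) →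
      ULLg pr Γ Δ P ((y, A) ::ₘ Λ) → ULLg pr Γ Δ' Q ((x, B) ::ₘ Λ') →
      ULLg pr Γ (Δ + Δ') (.nu y (.out x y (.par P Q))) ((x, .tensor A B) ::ₘ (Λ + Λ'))
  | tensorL : pr Λ → ULLg pr Γ ((y, A) ::ₘ (x, B) ::ₘ Δ) P Λ →
      ULLg pr Γ ((x, .tensor A B) ::ₘ Δ) (.inp x y P) Λ
  | parrR : pr ((x, A.parr B) ::ₘ Λ) → ULLg pr Γ Δ P ((y, A) ::ₘ (x, B) ::ₘ Λ) →
      ULLg pr Γ Δ (.inp x y P) ((x, A.parr B) ::ₘ Λ)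
  | parrL : pr (Λ + Λ') → ULLg pr Γ ((y, A) ::ₘ Δ) P Λ → ULLg pr Γ ((x, B) ::ₘ Δ') Q Λ' →
      ULLg pr Γ ((x, A.parr B) ::ₘ (Δ + Δ')) (.nu y (.out x y (.par P Q))) (Λ + Λ')
  | lolliR : pr ((x, .lolli A B) ::ₘ Λ) → ULLg pr Γ ((y, A) ::ₘ Δ) P ((x, B) ::ₘ Λ) →
      ULLg pr Γ Δ (.inp x y P) ((x, .lolli A B) ::ₘ Λ)
  | lolliL : pr (Λ + Λ') → ULLg pr Γ Δ P ((y, A) ::ₘ Λ) → ULLg pr Γ ((x, B) ::ₘ Δ') Q Λ' →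
      ULLg pr Γ ((x, .lolli A B) ::ₘ (Δ + Δ')) (.nu y (.out x y (.par P Q))) (Λ + Λ')
  | oplusR : pr ((x, .oplus I As) ::ₘ Λ) → j ∈ I → ULLg pr Γ Δ P ((x, As j) ::ₘ Λ) →
      ULLg pr Γ Δ (.sel x j P) ((x, .oplus I As) ::ₘ Λ)
  | oplusL : pr Λ → (∀ i ∈ I, ULLg pr Γ ((x, As i) ::ₘ Δ) (Ps i) Λ) →
      ULLg pr Γ ((x, .oplus I As) ::ₘ Δ) (.bra x I Ps) Λ
  | withR : pr ((x, .withT I As) ::ₘ Λ) → (∀ i ∈ I, ULLg pr Γ Δ (Ps i) ((x, As i) ::ₘ Λ)) →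
      ULLg pr Γ Δ (.bra x I Ps) ((x, .withT I As) ::ₘ Λ)
  | withL : pr Λ → j ∈ I → ULLg pr Γ ((x, As j) ::ₘ Δ) P Λ →
      ULLg pr Γ ((x, .withT I As) ::ₘ Δ) (.sel x j P) Λ
  | copyR : pr Λ → ULLg pr ((u, A) ::ₘ Γ) Δ P ((x, A.dual) ::ₘ Λ) →
      ULLg pr ((u, A) ::ₘ Γ) Δ (.nu x (.out u x P)) Λ
  | copyL : pr Λ → ULLg pr ((u, A) ::ₘ Γ) ((x, A) ::ₘ Δ) P Λ →
      ULLg pr ((u, A) ::ₘ Γ) Δ (.nu x (.out u x P)) Λ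
  | bangR : pr {(x, .bang A)} → ULLg pr Γ 0 P {(y, A)} →
      ULLg pr Γ 0 (.rep x y P) {(x, .bang A)}
  | bangL : pr Λ → ULLg pr ((u, A) ::ₘ Γ) Δ P Λ →
      ULLg pr Γ ((x, .bang A) ::ₘ Δ) (P.subst x u) Λ
  | questR : pr ((x, .quest A.dual) ::ₘ Λ) → ULLg pr ((u, A) ::ₘ Γ) Δ P Λ →
      ULLg pr Γ Δ (P.subst x u) ((x, .quest A.dual) ::ₘ Λ)
  | questL : pr 0 → ULLg pr Γ {(y, A)} P 0 →
      ULLg pr Γ {(x, .quest A)} (.rep x y P) 0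
  | cutRL : pr (Λ + Λ') → ULLg pr Γ Δ P ((x, A) ::ₘ Λ) → ULLg pr Γ ((x, A) ::ₘ Δ') Q Λ' →
      ULLg pr Γ (Δ + Δ') (.nu x (.par P Q)) (Λ + Λ')
  | cutLR : pr (Λ + Λ') → ULLg pr Γ ((x, A) ::ₘ Δ) P Λ → ULLg pr Γ Δ' Q ((x, A) ::ₘ Λ') →
      ULLg pr Γ (Δ + Δ') (.nu x (.par P Q)) (Λ + Λ')
  | cutRR : pr (Λ + Λ') → ULLg pr Γ Δ P ((x, A) ::ₘ Λ) → ULLg pr Γ Δ' Q ((x, A.dual) ::ₘ Λ') →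
      ULLg pr Γ (Δ + Δ') (.nu x (.par P Q)) (Λ + Λ')
  | cutLL : pr (Λ + Λ') → ULLg pr Γ ((x, A) ::ₘ Δ) P Λ → ULLg pr Γ ((x, A.dual) ::ₘ Δ') Q Λ' →
      ULLg pr Γ (Δ + Δ') (.nu x (.par P Q)) (Λ + Λ')
  | cutBangR : pr Λ → ULLg pr ((u, A) ::ₘ Γ) Δ P Λ → ULLg pr Γ 0 Q {(x, A)} →
      ULLg pr Γ Δ (.nu u (.par P (.rep u x Q))) Λ
  | cutBangL : pr Λ → ULLg pr Γ 0 P {(x, A)} → ULLg pr ((u, A) ::ₘ Γ) Δ Q Λ →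
      ULLg pr Γ Δ (.nu u (.par (.rep u x P) Q)) Λ
  | cutQuestR : pr Λ → ULLg pr ((u, A) ::ₘ Γ) Δ P Λ → ULLg pr Γ {(x, A.dual)} Q 0 →
      ULLg pr Γ Δ (.nu u (.par P (.rep u x Q))) Λ
  | cutQuestL : pr Λ → ULLg pr Γ {(x, A.dual)} P 0 → ULLg pr ((u, A) ::ₘ Γ) Δ Q Λ →
      ULLg pr Γ Δ (.nu u (.par (.rep u x P) Q)) Λ

/-- The πULL type system: judgment Γ; Δ ⊢ P :: Λ. -/
abbrev ULL : Ctx → Ctx → Proc → Ctx → Prop := ULLg fun _ => True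

/-- Derivability in πULL by a derivation in which every sequent has r-degree 1. -/
abbrev ULL1 : Ctx → Ctx → Proc → Ctx → Prop := ULLg fun Λ => Multiset.card Λ = 1

/-- The πULL_↷ type system: ∗-marked rules plus the moving rules ↶ and ↷, the
latter enabled only when `mv` holds. -/
inductive ULLmg (mv : Prop) : Ctx → Ctx → Proc → Ctx → Prop where
  | idR : ULLmg mv Γ {(x, A)} (.fwd x y) {(y, A)}
  | oneR : ULLmg mv Γ 0 (.closeS x .nil) {(x, .one)}
  | oneL : ULLmg mv Γ Δ P Λ → ULLmg mv Γ ((x, .one) ::ₘ Δ) (.closeR x P) Λ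
  | tensorR : ULLmg mv Γ Δ P ((y, A) ::ₘ Λ) → ULLmg mv Γ Δ' Q ((x, B) ::ₘ Λ') →
      ULLmg mv Γ (Δ + Δ') (.nu y (.out x y (.par P Q))) ((x, .tensor A B) ::ₘ (Λ + Λ'))
  | tensorL : ULLmg mv Γ ((y, A) ::ₘ (x, B) ::ₘ Δ) P Λ →
      ULLmg mv Γ ((x, .tensor A B) ::ₘ Δ) (.inp x y P) Λ
  | lolliR : ULLmg mv Γ ((y, A) ::ₘ Δ) P ((x, B) ::ₘ Λ) →
      ULLmg mv Γ Δ (.inp x y P) ((x, .lolli A B) ::ₘ Λ)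
  | lolliL : ULLmg mv Γ Δ P ((y, A) ::ₘ Λ) → ULLmg mv Γ ((x, B) ::ₘ Δ') Q Λ' →
      ULLmg mv Γ ((x, .lolli A B) ::ₘ (Δ + Δ')) (.nu y (.out x y (.par P Q))) (Λ + Λ')
  | oplusR : j ∈ I → ULLmg mv Γ Δ P ((x, As j) ::ₘ Λ) →
      ULLmg mv Γ Δ (.sel x j P) ((x, .oplus I As) ::ₘ Λ)
  | oplusL : (∀ i ∈ I, ULLmg mv Γ ((x, As i) ::ₘ Δ) (Ps i) Λ) →
      ULLmg mv Γ ((x, .oplus I As) ::ₘ Δ) (.bra x I Ps) Λ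
  | withR : (∀ i ∈ I, ULLmg mv Γ Δ (Ps i) ((x, As i) ::ₘ Λ)) →
      ULLmg mv Γ Δ (.bra x I Ps) ((x, .withT I As) ::ₘ Λ)
  | withL : j ∈ I → ULLmg mv Γ ((x, As j) ::ₘ Δ) P Λ →
      ULLmg mv Γ ((x, .withT I As) ::ₘ Δ) (.sel x j P) Λ
  | copyL : ULLmg mv ((u, A) ::ₘ Γ) ((x, A) ::ₘ Δ) P Λ →
      ULLmg mv ((u, A) ::ₘ Γ) Δ (.nu x (.out u x P)) Λ
  | bangR : ULLmg mv Γ 0 P {(y, A)} → ULLmg mv Γ 0 (.rep x y P) {(x, .bang A)}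
  | bangL : ULLmg mv ((u, A) ::ₘ Γ) Δ P Λ →
      ULLmg mv Γ ((x, .bang A) ::ₘ Δ) (P.subst x u) Λ
  | cutRL : ULLmg mv Γ Δ P ((x, A) ::ₘ Λ) → ULLmg mv Γ ((x, A) ::ₘ Δ') Q Λ' →
      ULLmg mv Γ (Δ + Δ') (.nu x (.par P Q)) (Λ + Λ')
  | cutLR : ULLmg mv Γ ((x, A) ::ₘ Δ) P Λ → ULLmg mv Γ Δ' Q ((x, A) ::ₘ Λ') →
      ULLmg mv Γ (Δ + Δ') (.nu x (.par P Q)) (Λ + Λ')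
  | cutBangR : ULLmg mv ((u, A) ::ₘ Γ) Δ P Λ → ULLmg mv Γ 0 Q {(x, A)} →
      ULLmg mv Γ Δ (.nu u (.par P (.rep u x Q))) Λ
  | cutBangL : ULLmg mv Γ 0 P {(x, A)} → ULLmg mv ((u, A) ::ₘ Γ) Δ Q Λ →
      ULLmg mv Γ Δ (.nu u (.par (.rep u x P) Q)) Λ
  | moveL : mv → ULLmg mv Γ Δ P ((x, A) ::ₘ Λ) → ULLmg mv Γ ((x, A.dual) ::ₘ Δ) P Λ
  | moveR : mv → ULLmg mv Γ ((x, A) ::ₘ Δ) P Λ → ULLmg mv Γ Δ P ((x, A.dual) ::ₘ Λ)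

/-- πULL_↷: judgment Γ; Δ ⊢_↷ P :: Λ. -/
abbrev ULLm : Ctx → Ctx → Proc → Ctx → Prop := ULLmg True

/-- πULL_↷-derivability never using the moving rules ↶ and ↷
(equivalently: derivability using only the ∗-marked rules). -/
abbrev ULLstar : Ctx → Ctx → Proc → Ctx → Prop := ULLmg False

/-- The πCLL* type system: judgment P ⊢_C Γ; Δ. -/
inductive CLL : Proc → Ctx → Ctx → Prop where
  | id : CLL (.fwd x y) Γ ((x, A) ::ₘ {(y, A.dual)})
  | one : CLL (.closeS x .nil) Γ {(x, .one)}
  | bot : CLL P Γ Δ → CLL (.closeR x P) Γ ((x, .bot) ::ₘ Δ)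
  | tensor : CLL P Γ ((y, A) ::ₘ Δ) → CLL Q Γ ((x, B) ::ₘ Δ') →
      CLL (.nu y (.out x y (.par P Q))) Γ ((x, .tensor A B) ::ₘ (Δ + Δ'))
  | parr : CLL P Γ ((y, A) ::ₘ (x, B) ::ₘ Δ) → CLL (.inp x y P) Γ ((x, A.parr B) ::ₘ Δ)
  | oplus : j ∈ I → CLL P Γ ((x, As j) ::ₘ Δ) →
      CLL (.sel x j P) Γ ((x, .oplus I As) ::ₘ Δ)
  | withR : (∀ i ∈ I, CLL (Ps i) Γ ((x, As i) ::ₘ Δ)) →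
      CLL (.bra x I Ps) Γ ((x, .withT I As) ::ₘ Δ)
  | copy : CLL P ((u, A) ::ₘ Γ) ((y, A) ::ₘ Δ) → CLL (.nu y (.out u y P)) ((u, A) ::ₘ Γ) Δ
  | quest : CLL P ((u, A) ::ₘ Γ) Δ → CLL (P.subst x u) Γ ((x, .quest A) ::ₘ Δ)
  | bang : CLL P Γ {(y, A)} → CLL (.rep x y P) Γ {(x, .bang A)}
  | cut : CLL P Γ ((x, A) ::ₘ Δ) → CLL Q Γ ((x, A.dual) ::ₘ Δ') →
      CLL (.nu x (.par P Q)) Γ (Δ + Δ')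
  | cutQR : CLL P ((u, A) ::ₘ Γ) Δ → CLL Q Γ {(x, A.dual)} →
      CLL (.nu u (.par P (.rep u x Q))) Γ Δ
  | cutQL : CLL P Γ {(x, A.dual)} → CLL Q ((u, A) ::ₘ Γ) Δ →
      CLL (.nu u (.par (.rep u x P) Q)) Γ Δ

/-- πILL propositions: without ⊥ and ?. -/
inductive ITyp : Type where
  | one : ITyp
  | tensor : ITyp → ITyp → ITyp
  | lolli : ITyp → ITyp → ITyp
  | oplus : Finset ℕ → (ℕ → ITyp) → ITyp
  | withT : Finset ℕ → (ℕ → ITyp) → ITyp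
  | bang : ITyp → ITyp

/-- Embedding of πILL propositions into ULL propositions. -/
def ITyp.toSTyp : ITyp → STyp
  | .one => .one
  | .tensor A B => .tensor A.toSTyp B.toSTyp
  | .lolli A B => .lolli A.toSTyp B.toSTyp
  | .oplus I f => .oplus I fun i => (f i).toSTyp
  | .withT I f => .withT I fun i => (f i).toSTyp
  | .bang A => .bang A.toSTyp

abbrev ICtx : Type := Multiset (ℕ × ITyp)

def ICtx.toCtx (Γ : ICtx) : Ctx := Γ.map fun p => (p.1, p.2.toSTyp)

/-- The πILL type system: judgment Γ; Δ ⊢_I P :: z:C (exactly one assignment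
on the right). -/
inductive ILL : ICtx → ICtx → Proc → ℕ → ITyp → Prop where
  | id : ILL Γ {(x, A)} (.fwd x y) y A
  | oneR : ILL Γ 0 (.closeS x .nil) x .one
  | oneL : ILL Γ Δ P z C → ILL Γ ((x, .one) ::ₘ Δ) (.closeR x P) z C
  | tensorR : ILL Γ Δ P y A → ILL Γ Δ' Q x B →
      ILL Γ (Δ + Δ') (.nu y (.out x y (.par P Q))) x (.tensor A B)
  | tensorL : ILL Γ ((y, A) ::ₘ (x, B) ::ₘ Δ) P z C →
      ILL Γ ((x, .tensor A B) ::ₘ Δ) (.inp x y P) z C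
  | lolliR : ILL Γ ((y, A) ::ₘ Δ) P x B → ILL Γ Δ (.inp x y P) x (.lolli A B)
  | lolliL : ILL Γ Δ P y A → ILL Γ ((x, B) ::ₘ Δ') Q z C →
      ILL Γ ((x, .lolli A B) ::ₘ (Δ + Δ')) (.nu y (.out x y (.par P Q))) z C
  | oplusR : j ∈ I → ILL Γ Δ P x (As j) → ILL Γ Δ (.sel x j P) x (.oplus I As)
  | oplusL : (∀ i ∈ I, ILL Γ ((x, As i) ::ₘ Δ) (Ps i) z C) →
      ILL Γ ((x, .oplus I As) ::ₘ Δ) (.bra x I Ps) z C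
  | withR : (∀ i ∈ I, ILL Γ Δ (Ps i) x (As i)) →
      ILL Γ Δ (.bra x I Ps) x (.withT I As)
  | withL : j ∈ I → ILL Γ ((x, As j) ::ₘ Δ) P z C →
      ILL Γ ((x, .withT I As) ::ₘ Δ) (.sel x j P) z C
  | copy : ILL ((u, A) ::ₘ Γ) ((x, A) ::ₘ Δ) P z C →
      ILL ((u, A) ::ₘ Γ) Δ (.nu x (.out u x P)) z C
  | bangR : ILL Γ 0 P y A → ILL Γ 0 (.rep x y P) x (.bang A)
  | bangL : ILL ((u, A) ::ₘ Γ) Δ P z C → ILL Γ ((x, .bang A) ::ₘ Δ) (P.subst x u) z C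
  | cutRL : ILL Γ Δ P x A → ILL Γ ((x, A) ::ₘ Δ') Q z C →
      ILL Γ (Δ + Δ') (.nu x (.par P Q)) z C
  | cutLR : ILL Γ ((x, A) ::ₘ Δ) P z C → ILL Γ Δ' Q x A →
      ILL Γ (Δ + Δ') (.nu x (.par P Q)) z C
  | cutBangR : ILL ((u, A) ::ₘ Γ) Δ P z C → ILL Γ 0 Q x A →
      ILL Γ Δ (.nu u (.par P (.rep u x Q))) z C
  | cutBangL : ILL Γ 0 P x A → ILL ((u, A) ::ₘ Γ) Δ Q z C →
      ILL Γ Δ (.nu u (.par (.rep u x P) Q)) z C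

lemma STyp.dual_dual (A : STyp) : A.dual.dual = A := by
  induction A with
  | one | bot => rfl
  | tensor _ _ _ ih | lolli _ _ _ ih | bang _ ih | quest _ ih => simp [STyp.dual, ih]
  | oplus _ _ ih | withT _ _ ih => simp [STyp.dual, ih]

lemma STyp.dual_tensor (A B : STyp) : (A.tensor B).dual = A.dual.parr B.dual := by
  rw [STyp.parr, STyp.dual_dual, STyp.dual]

lemma STyp.lolli_eq_parr (A B : STyp) : A.lolli B = A.dual.parr B := by
  rw [STyp.parr, STyp.dual_dual]

@[simp] lemma Ctx.dual_cons (p : ℕ × STyp) (Δ : Ctx) :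
    Ctx.dual (p ::ₘ Δ) = (p.1, p.2.dual) ::ₘ Δ.dual := Multiset.map_cons _ _ _

@[simp] lemma Ctx.dual_add (Δ Δ' : Ctx) : Ctx.dual (Δ + Δ') = Δ.dual + Δ'.dual :=
  Multiset.map_add _ _ _

@[simp] lemma ICtx.toCtx_cons (p : ℕ × ITyp) (Δ : ICtx) :
    ICtx.toCtx (p ::ₘ Δ) = (p.1, p.2.toSTyp) ::ₘ Δ.toCtx := Multiset.map_cons _ _ _

@[simp] lemma ICtx.toCtx_add (Δ Δ' : ICtx) : ICtx.toCtx (Δ + Δ') = Δ.toCtx + Δ'.toCtx :=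
  Multiset.map_add _ _ _

theorem CLL.of_ILL {Γ Δ : ICtx} {P : Proc} {z : ℕ} {C : ITyp} (h : ILL Γ Δ P z C) :
    CLL P Γ.toCtx.dual ((z, C.toSTyp) ::ₘ Δ.toCtx.dual) := by
  induction h with
  | @id _ x A y =>
    convert CLL.id (x := x) (y := y) (A := A.toSTyp.dual) using 1
    rw [STyp.dual_dual]
    exact Multiset.pair_comm _ _
  | oneR => exact CLL.one
  | oneL _ ih =>
    rw [ICtx.toCtx_cons, Ctx.dual_cons, Multiset.cons_swap]
    exact CLL.bot ih
  | tensorR _ _ ih1 ih2 =>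
    rw [ICtx.toCtx_add, Ctx.dual_add]
    exact CLL.tensor ih1 ih2
  | tensorL _ ih =>
    rw [ICtx.toCtx_cons, Ctx.dual_cons, Multiset.cons_swap, ITyp.toSTyp, STyp.dual_tensor]
    simp only [ICtx.toCtx_cons, Ctx.dual_cons] at ih
    exact CLL.parr (by simpa only [Multiset.cons_swap] using ih)
  | lolliR _ ih =>
    rw [ITyp.toSTyp, STyp.lolli_eq_parr]
    simp only [ICtx.toCtx_cons, Ctx.dual_cons] at ih
    exact CLL.parr (by simpa only [Multiset.cons_swap] using ih)
  | lolliL _ _ ih1 ih2 =>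
    rw [ICtx.toCtx_cons, Ctx.dual_cons, ICtx.toCtx_add, Ctx.dual_add, Multiset.cons_swap,
      ← Multiset.add_cons]
    simp only [ICtx.toCtx_cons, Ctx.dual_cons] at ih2
    exact CLL.tensor ih1 (by simpa only [Multiset.cons_swap] using ih2)
  | oplusR hj _ ih => exact CLL.oplus hj ih
  | oplusL _ ih =>
    rw [ICtx.toCtx_cons, Ctx.dual_cons, Multiset.cons_swap]
    simp only [ICtx.toCtx_cons, Ctx.dual_cons] at ih
    exact CLL.withR fun i hi => by simpa only [Multiset.cons_swap] using ih i hi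
  | withR _ ih => exact CLL.withR ih
  | withL hj _ ih =>
    rw [ICtx.toCtx_cons, Ctx.dual_cons, Multiset.cons_swap]
    simp only [ICtx.toCtx_cons, Ctx.dual_cons] at ih
    exact CLL.oplus hj (by simpa only [Multiset.cons_swap] using ih)
  | copy _ ih =>
    simp only [ICtx.toCtx_cons, Ctx.dual_cons] at ih ⊢
    exact CLL.copy (by simpa only [Multiset.cons_swap] using ih)
  | bangR _ ih => exact CLL.bang ih
  | bangL _ ih =>
    rw [ICtx.toCtx_cons, Ctx.dual_cons, Multiset.cons_swap]
    simp only [ICtx.toCtx_cons, Ctx.dual_cons] at ih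
    exact CLL.quest ih
  | cutRL _ _ ih1 ih2 =>
    rw [ICtx.toCtx_add, Ctx.dual_add, ← Multiset.add_cons]
    simp only [ICtx.toCtx_cons, Ctx.dual_cons] at ih2
    exact CLL.cut ih1 (by simpa only [Multiset.cons_swap] using ih2)
  | @cutLR _ _ A _ _ _ _ _ _ _ _ ih1 ih2 =>
    rw [ICtx.toCtx_add, Ctx.dual_add, ← Multiset.cons_add]
    simp only [ICtx.toCtx_cons, Ctx.dual_cons] at ih1
    exact CLL.cut (A := A.toSTyp.dual) (by simpa only [Multiset.cons_swap] using ih1)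
      (STyp.dual_dual _ ▸ ih2)
  | cutBangR _ _ ih1 ih2 =>
    simp only [ICtx.toCtx_cons, Ctx.dual_cons] at ih1
    exact CLL.cutQR ih1 (STyp.dual_dual _ ▸ ih2)
  | cutBangL _ _ ih1 ih2 =>
    simp only [ICtx.toCtx_cons, Ctx.dual_cons] at ih2
    exact CLL.cutQL (STyp.dual_dual _ ▸ ih1) ih2

lemma Proc.eq_closeR_of_subst_eq_closeR {P R : Proc} {y x c : ℕ}
    (h : P.subst y x = .closeR c R) : ∃ c' R', P = .closeR c' R' := by
  cases P <;> simp only [Proc.subst] at h <;> (try split at h) <;> simp_all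

lemma Proc.eq_rep_of_subst_eq_rep {P Q : Proc} {y x a b : ℕ}
    (h : P.subst y x = .rep a b Q) :
    ∃ a' Q', P = .rep a' b Q' ∧ (Q' = Q ∨ Q'.subst y x = Q) := by
  cases P <;> simp only [Proc.subst] at h <;> (try split at h) <;> simp_all

lemma ILL.ne_zero_of_closeR {Γ Δ : ICtx} {c : ℕ} {R : Proc} {z : ℕ} {C : ITyp}
    (h : ILL Γ Δ (.closeR c R) z C) : Δ ≠ 0 := by
  generalize hP : Proc.closeR c R = P at h
  cases h <;> simp_all

lemma ILL.not_rep_closeR {Γ Δ : ICtx} {a b c : ℕ} {R : Proc} {z : ℕ} {C : ITyp} :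
    ¬ ILL Γ Δ (.rep a b (.closeR c R)) z C := by
  generalize hP : Proc.rep a b (.closeR c R) = P
  intro h
  induction h generalizing a b c R with
  | bangR hR => cases hP; exact hR.ne_zero_of_closeR rfl
  | bangL _ ih =>
    obtain ⟨a', Q', rfl, hQ'⟩ := Proc.eq_rep_of_subst_eq_rep hP.symm
    obtain ⟨c', R', rfl⟩ : ∃ c' R', Q' = .closeR c' R' := by
      rcases hQ' with rfl | hQ'
      · exact ⟨c, R, rfl⟩
      · exact Proc.eq_closeR_of_subst_eq_closeR hQ'
    exact ih rfl
  | _ => cases hP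

/-- I ⊊ C. -/
theorem I_ssubset_C :
    {P : Proc | ∃ (Γ Δ : ICtx) (x : ℕ) (A : ITyp), ILL Γ Δ P x A} ⊂
    {P : Proc | ∃ (Γ Δ : Ctx), CLL P Γ Δ} := by
  refine (Set.ssubset_iff_of_subset ?_).2 ?_
  · rintro P ⟨Γ, Δ, z, C, h⟩
    exact ⟨_, _, CLL.of_ILL h⟩
  · refine ⟨.rep 0 1 (.closeR 1 (.nu 3 (.out 2 3 (.closeS 3 .nil)))),
      ⟨{(2, .one)}, {(0, .bang .bot)}, .bang (.bot (.copy .one))⟩, ?_⟩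
    rintro ⟨Γ, Δ, z, C, h⟩
    exact ILL.not_rep_closeR h
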